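/- Let F be μ-strongly convex and L-smooth on ℝⁿ, C nonempty closed convex, 0 < α < 1/L, x* = argmin_{x∈C} F(x), and R(x) = (x − P(x − α∇F(x)))/α. Then for all x ∈ C, the inequalities (1 − √(1−αμ))‖x−x*‖ ≤ α‖R(x)‖ ≤ (1 + √(1−αμ))‖x−x*‖ hold. -/

import Mathlib

/-!
Write `y = P (x - α ∇F x)`, so that `α ‖R x‖ = ‖x - y‖`. The descent lemma at `x, y`, strong
convexity at `x` towards `x*`, minimality of `x*` at `y ∈ C` and the obtuse-angle property of the
projection (`⟪x - α ∇F x - y, x* - y⟫ ≤ 0`) combine, using `αL ≤ 1`, into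
`αμ ‖x - x*‖² + ‖x - y‖² ≤ 2 ⟪x - y, x - x*⟫`. By Cauchy–Schwarz, `t = ‖x - y‖` and
`d = ‖x - x*‖` then satisfy `(t - d)² ≤ (1 - αμ) d²`, i.e. `|t - d| ≤ √(1 - αμ) d`.
-/

open scoped RealInnerProductSpace

section

variable {E : Type*} [NormedAddCommGroup E] [InnerProductSpace ℝ E]

theorem descent_lemma [CompleteSpace E] {F : E → ℝ} {L : ℝ} (hF : Differentiable ℝ F)
    (hsmooth : ∀ x y, ‖gradient F x - gradient F y‖ ≤ L * ‖x - y‖) (x y : E) :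
    F y ≤ F x + ⟪gradient F x, y - x⟫ + L / 2 * ‖y - x‖ ^ 2 := by
  set v := y - x
  -- `φ` is the gap between `F` and its quadratic upper model along the segment from `x` to `y`.
  set φ : ℝ → ℝ := fun t => F (x + t • v) - t * ⟪gradient F x, v⟫ - L / 2 * t ^ 2 * ‖v‖ ^ 2
  have hφ : ∀ t : ℝ, HasDerivAt φ
      (⟪gradient F (x + t • v) - gradient F x, v⟫ - L * t * ‖v‖ ^ 2) t := by
    intro t
    have hline : HasDerivAt (fun t : ℝ => x + t • v) v t := by
      simpa using ((hasDerivAt_id t).smul_const v).const_add x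
    have hF_line := (hF (x + t • v)).hasGradientAt.hasFDerivAt.comp_hasDerivAt t hline
    rw [InnerProductSpace.toDual_apply_apply] at hF_line
    refine ((hF_line.sub ((hasDerivAt_id t).mul_const ⟪gradient F x, v⟫)).sub
      (((hasDerivAt_pow 2 t).const_mul (L / 2)).mul_const (‖v‖ ^ 2))).congr_deriv ?_
    rw [inner_sub_left]
    push_cast
    ring
  have hanti : AntitoneOn φ (Set.Icc 0 1) := by
    refine antitoneOn_of_deriv_nonpos (convex_Icc 0 1)
      (fun t _ => (hφ t).continuousAt.continuousWithinAt)
      (fun t _ => (hφ t).differentiableAt.differentiableWithinAt) fun t ht => ?_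
    rw [interior_Icc] at ht
    have hlip : ‖gradient F (x + t • v) - gradient F x‖ ≤ L * (t * ‖v‖) := by
      simpa [norm_smul, abs_of_pos ht.1] using hsmooth (x + t • v) x
    have hcs := real_inner_le_norm (gradient F (x + t • v) - gradient F x) v
    rw [(hφ t).deriv]
    nlinarith [norm_nonneg v]
  have h01 := hanti (Set.left_mem_Icc.2 zero_le_one) (Set.right_mem_Icc.2 zero_le_one) zero_le_one
  simp only [φ, v, zero_smul, add_zero, zero_mul, sub_zero, one_smul, one_mul, one_pow,
    add_sub_cancel] at h01
  linarith

theorem real_inner_sub_le_zero_of_forall_norm_sub_le {C : Set E} (hC : Convex ℝ C) {u p : E}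
    (hp : p ∈ C) (hmin : ∀ z ∈ C, ‖u - p‖ ≤ ‖u - z‖) : ∀ z ∈ C, ⟪u - p, z - p⟫ ≤ 0 := by
  have : Nonempty C := ⟨⟨p, hp⟩⟩
  have hbdd : BddBelow (Set.range fun z : C => ‖u - z‖) := ⟨0, by rintro _ ⟨z, rfl⟩; positivity⟩
  exact (norm_eq_iInf_iff_real_inner_le_zero hC hp).1
    (le_antisymm (le_ciInf fun z => hmin z z.2) (ciInf_le hbdd ⟨p, hp⟩))

theorem mul_sq_add_sq_le_two_mul_inner_of_projected_step {F : E → ℝ} {g x y xs : E}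
    {α L μ : ℝ} (hα : 0 ≤ α) (hαL : α * L ≤ 1)
    (hdesc : F y ≤ F x + ⟪g, y - x⟫ + L / 2 * ‖y - x‖ ^ 2)
    (hsconv : F x + ⟪g, xs - x⟫ + μ / 2 * ‖xs - x‖ ^ 2 ≤ F xs) (hmin : F xs ≤ F y)
    (hproj : ⟪x - α • g - y, xs - y⟫ ≤ 0) :
    α * μ * ‖x - xs‖ ^ 2 + ‖x - y‖ ^ 2 ≤ 2 * ⟪x - y, x - xs⟫ := by
  have hgap : ⟪g, xs - y⟫ ≤ L / 2 * ‖x - y‖ ^ 2 - μ / 2 * ‖x - xs‖ ^ 2 := by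
    rw [show xs - y = (xs - x) - (y - x) by abel, inner_sub_right, norm_sub_rev x y,
      norm_sub_rev x xs]
    linarith
  have hvi : ‖x - y‖ ^ 2 - ⟪x - y, x - xs⟫ ≤ α * ⟪g, xs - y⟫ := by
    have hsplit : ⟪x - y, xs - y⟫ = ‖x - y‖ ^ 2 - ⟪x - y, x - xs⟫ := by
      rw [show xs - y = (x - y) - (x - xs) by abel, inner_sub_right, real_inner_self_eq_norm_sq]
    rw [sub_right_comm, inner_sub_left, real_inner_smul_left, hsplit] at hproj
    linarith
  have hstep : α * L * ‖x - y‖ ^ 2 ≤ ‖x - y‖ ^ 2 :=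
    mul_le_of_le_one_left (sq_nonneg _) hαL
  linarith [mul_le_mul_of_nonneg_left hgap hα]

end

theorem abs_sub_le_sqrt_one_sub_mul_of_mul_sq_add_sq_le {c t d : ℝ} (hd : 0 ≤ d)
    (h : c * d ^ 2 + t ^ 2 ≤ 2 * t * d) : |t - d| ≤ √(1 - c) * d := by
  calc |t - d| ≤ √((1 - c) * d ^ 2) := Real.abs_le_sqrt (by linarith)
    _ = √(1 - c) * d := by rw [Real.sqrt_mul' _ (sq_nonneg d), Real.sqrt_sq hd]

theorem stmt_5_general {n : ℕ} (F : EuclideanSpace ℝ (Fin n) → ℝ)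
    (hF_diff : ContDiff ℝ 1 F)
    (L μ : ℝ)
    (hF_smooth : ∀ x y, ‖gradient F x - gradient F y‖ ≤ L * ‖x - y‖)
    (hF_sconv : ∀ x y, F x + ⟪gradient F x, y - x⟫ + μ / 2 * ‖y - x‖ ^ 2 ≤ F y)
    (C : Set (EuclideanSpace ℝ (Fin n)))
    (hC_convex : Convex ℝ C)
    (P : EuclideanSpace ℝ (Fin n) → EuclideanSpace ℝ (Fin n))
    (hP_mem : ∀ y, P y ∈ C)
    (hP_min : ∀ y, ∀ z ∈ C, ‖y - P y‖ ≤ ‖y - z‖)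
    (α : ℝ) (hα : 0 < α) (hαL : α < 1 / L)
    (xs : EuclideanSpace ℝ (Fin n)) (hxs_mem : xs ∈ C)
    (hxs_min : ∀ x ∈ C, F xs ≤ F x) :
    ∀ x ∈ C,
      (1 - Real.sqrt (1 - α * μ)) * ‖x - xs‖ ≤
          α * ‖α⁻¹ • (x - P (x - α • gradient F x))‖ ∧
        α * ‖α⁻¹ • (x - P (x - α • gradient F x))‖ ≤
          (1 + Real.sqrt (1 - α * μ)) * ‖x - xs‖ := by
  intro x _
  set y := P (x - α • gradient F x)
  have hscaled : α * ‖α⁻¹ • (x - y)‖ = ‖x - y‖ := by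
    rw [norm_smul, Real.norm_of_nonneg (inv_nonneg.2 hα.le), mul_inv_cancel_left₀ hα.ne']
  have hαL' : α * L ≤ 1 := by
    have hL : 0 < L := one_div_pos.1 (hα.trans hαL)
    exact ((lt_div_iff₀ hL).1 hαL).le
  have hkey := mul_sq_add_sq_le_two_mul_inner_of_projected_step hα.le hαL'
    (descent_lemma (hF_diff.differentiable one_ne_zero) hF_smooth x y) (hF_sconv x xs)
    (hxs_min y (hP_mem _))
    (real_inner_sub_le_zero_of_forall_norm_sub_le hC_convex (hP_mem _) (hP_min _) xs hxs_mem)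
  have hcs := real_inner_le_norm (x - y) (x - xs)
  have hbound := abs_sub_le_sqrt_one_sub_mul_of_mul_sq_add_sq_le (norm_nonneg (x - xs))
    (c := α * μ) (t := ‖x - y‖) (by linarith)
  rw [hscaled]
  constructor <;> linarith [abs_le.1 hbound]

/-- Two-sided bound between the reduced gradient and the distance to the constrained
minimizer under `μ`-strong convexity and `L`-smoothness, with `0 < α < 1/L`:
`(1 − √(1−αμ))‖x−x*‖ ≤ α‖R x‖ ≤ (1 + √(1−αμ))‖x−x*‖` for all `x ∈ C`. -/
theorem stmt_5 {n : ℕ} (F : EuclideanSpace ℝ (Fin n) → ℝ)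
    (hF_diff : ContDiff ℝ 1 F)
    (L μ : ℝ) (hL : 0 < L) (hμ : 0 < μ)
    (hF_smooth : ∀ x y, ‖gradient F x - gradient F y‖ ≤ L * ‖x - y‖)
    (hF_sconv : ∀ x y, F x + ⟪gradient F x, y - x⟫ + μ / 2 * ‖y - x‖ ^ 2 ≤ F y)
    (C : Set (EuclideanSpace ℝ (Fin n)))
    (hC_ne : C.Nonempty) (hC_closed : IsClosed C) (hC_convex : Convex ℝ C)
    (P : EuclideanSpace ℝ (Fin n) → EuclideanSpace ℝ (Fin n))
    (hP_mem : ∀ y, P y ∈ C)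
    (hP_min : ∀ y, ∀ z ∈ C, ‖y - P y‖ ≤ ‖y - z‖)
    (α : ℝ) (hα : 0 < α) (hαL : α < 1 / L)
    (xs : EuclideanSpace ℝ (Fin n)) (hxs_mem : xs ∈ C)
    (hxs_min : ∀ x ∈ C, F xs ≤ F x) :
    ∀ x ∈ C,
      (1 - Real.sqrt (1 - α * μ)) * ‖x - xs‖ ≤
          α * ‖α⁻¹ • (x - P (x - α • gradient F x))‖ ∧
        α * ‖α⁻¹ • (x - P (x - α • gradient F x))‖ ≤
          (1 + Real.sqrt (1 - α * μ)) * ‖x - xs‖ :=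
  stmt_5_general F hF_diff L μ hF_smooth hF_sconv C hC_convex P hP_mem hP_min α hα hαL xs hxs_mem
    hxs_min
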